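/- The simplicial cone C(n,i) = {y ∈ H(n) : y_i + ... + y_{i+t} ≤ 0, t = 0,...,n-1} (indices mod n+1) is generated by the vectors {v_0,...,v_n} \ {v_i}, where v_j = e_j - e_{j-1} (indices mod n+1) and e_j are standard unit vectors. -/

import Mathlib

/-- The hyperplane `H(n) = {y ∈ ℝ^{n+1} : y_0 + ⋯ + y_n = 0}`. -/
def hyperplaneH (n : ℕ) : Set (Fin (n + 1) → ℝ) :=
  {y | ∑ i, y i = 0}

/-- The simplicial cone `C(n,i) ⊆ H(n)` cut out by requiring all consecutive
cyclic partial sums `y_i + ⋯ + y_{i+t} ≤ 0` for `t = 0,…,n-1` (indices mod `n+1`). -/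
def coneC (n : ℕ) (i : Fin (n + 1)) : Set (Fin (n + 1) → ℝ) :=
  {y | y ∈ hyperplaneH n ∧
    ∀ t < n, ∑ s ∈ Finset.range (t + 1), y (i + Fin.ofNat (n + 1) s) ≤ 0}

/-- The vector `v_j = -e_{j-1} + e_j` (indices mod `n+1`). -/
def vecV (n : ℕ) (j : Fin (n + 1)) : Fin (n + 1) → ℝ :=
  Pi.single j 1 - Pi.single (j - 1) 1

/-! The coordinates of `y = ∑ⱼ cⱼ vⱼ` are the cyclic differences `y_k = c_k - c_{k+1}`, so the
partial sums `y_i + ⋯ + y_{i+t}` telescope to `c_i - c_{i+t+1}`. With `c_i = 0` the inequalities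
defining `C(n,i)` say exactly that the remaining coefficients are nonnegative. Conversely, for
`y ∈ H(n)` the partial sums along the cycle are `(n+1)`-periodic, so `c_j := -(y_i + ⋯ + y_{j-1})`
is well defined on `ℤ/(n+1)` and recovers `y`. -/

open Finset Fin.NatCast Fin.CommRing

namespace ConeC

variable {n : ℕ}

lemma sum_smul_vecV_apply (c : Fin (n + 1) → ℝ) (k : Fin (n + 1)) :
    (∑ j, c j • vecV n j) k = c k - c (k + 1) := by
  simp only [Finset.sum_apply, Pi.smul_apply, vecV, Pi.sub_apply, smul_eq_mul, mul_sub,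
    sum_sub_distrib, Pi.single_apply]
  congr 1
  · simp
  · simp only [eq_sub_iff_add_eq, mul_ite, mul_one, mul_zero]
    rw [sum_eq_single (k + 1)] <;> simp +contextual [eq_comm]

section Cyclic

variable {M : Type*} [AddCommMonoid M]

lemma sum_range_add_natCast (i : Fin (n + 1)) (y : Fin (n + 1) → M) :
    ∑ s ∈ range (n + 1), y (i + s) = ∑ k, y k := by
  rw [← Fin.sum_univ_eq_sum_range (fun s => y (i + s))]
  simp only [Fin.cast_val_eq_self]
  exact Equiv.sum_comp (Equiv.addLeft i) y

def cyclicPartialSum (i : Fin (n + 1)) (y : Fin (n + 1) → M) (m : ℕ) : M :=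
  ∑ s ∈ range m, y (i + s)

lemma cyclicPartialSum_succ (i : Fin (n + 1)) (y : Fin (n + 1) → M) (m : ℕ) :
    cyclicPartialSum i y (m + 1) = cyclicPartialSum i y m + y (i + m) :=
  sum_range_succ _ _

section Periodic

variable {i : Fin (n + 1)} {y : Fin (n + 1) → M}

lemma cyclicPartialSum_add_period (hy : ∑ k, y k = 0) (m : ℕ) :
    cyclicPartialSum i y (m + (n + 1)) = cyclicPartialSum i y m := by
  rw [cyclicPartialSum, sum_range_add]
  simp only [Nat.cast_add, ← add_assoc, sum_range_add_natCast, hy, add_zero]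
  rfl

lemma cyclicPartialSum_mod (hy : ∑ k, y k = 0) (m : ℕ) :
    cyclicPartialSum i y (m % (n + 1)) = cyclicPartialSum i y m := by
  conv_rhs => rw [← Nat.mod_add_div m (n + 1)]
  induction m / (n + 1) with
  | zero => rfl
  | succ q ih => rw [Nat.mul_succ, ← add_assoc, cyclicPartialSum_add_period hy, ih]

lemma cyclicPartialSum_congr (hy : ∑ k, y k = 0) {a b : ℕ}
    (hab : (a : Fin (n + 1)) = b) : cyclicPartialSum i y a = cyclicPartialSum i y b := by
  rw [← cyclicPartialSum_mod hy a, ← cyclicPartialSum_mod hy b,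
    (ZMod.natCast_eq_natCast_iff' a b (n + 1)).mp hab]

end Periodic

end Cyclic

lemma cyclicPartialSum_sum_smul_vecV (i : Fin (n + 1)) (c : Fin (n + 1) → ℝ) (m : ℕ) :
    cyclicPartialSum i (∑ j, c j • vecV n j) m = c i - c (i + m) := by
  have step (s : ℕ) : (∑ j, c j • vecV n j) (i + s) = c (i + s) - c (i + (s + 1 : ℕ)) := by
    rw [sum_smul_vecV_apply]; push_cast; ring_nf
  simpa [cyclicPartialSum, step] using sum_range_sub' (fun s => c (i + (s : Fin (n + 1)))) m

lemma mem_coneC_iff {i : Fin (n + 1)} {y : Fin (n + 1) → ℝ} :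
    y ∈ coneC n i ↔ y ∈ hyperplaneH n ∧ ∀ m ≤ n, cyclicPartialSum i y m ≤ 0 := by
  simp only [coneC, Set.mem_ofPred_eq, Fin.ofNat_eq_cast]
  refine and_congr_right fun _ => ⟨fun h m hm => ?_, fun h t ht => h (t + 1) ht⟩
  rcases m with _ | t
  · simp [cyclicPartialSum]
  · exact h t hm

end ConeC

open ConeC in
/-- The cone `C(n,i)` is generated by the vectors `{v_0,…,v_n} \ {v_i}`:
it consists exactly of the nonnegative linear combinations of the `v_j`, `j ≠ i`. -/
theorem coneC_eq_generated (n : ℕ) (i : Fin (n + 1)) :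
    coneC n i = {y | ∃ c : Fin (n + 1) → ℝ,
      (∀ j, 0 ≤ c j) ∧ c i = 0 ∧ y = ∑ j, c j • vecV n j} := by
  ext y
  rw [mem_coneC_iff]
  constructor
  · rintro ⟨hy, hpartial⟩
    refine ⟨fun j => -cyclicPartialSum i y (j - i).val,
      fun j => neg_nonneg.mpr (hpartial _ (Fin.is_le _)), by simp [cyclicPartialSum], ?_⟩
    funext k
    have hshift : cyclicPartialSum i y (k + 1 - i).val = cyclicPartialSum i y ((k - i).val + 1) :=
      cyclicPartialSum_congr hy (by push_cast; ring)
    rw [sum_smul_vecV_apply, hshift, cyclicPartialSum_succ, Fin.cast_val_eq_self, add_sub_cancel]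
    ring
  · rintro ⟨c, hc, hci, rfl⟩
    refine ⟨?_, fun m _ => ?_⟩
    · show ∑ k, _ = 0
      rw [← sum_range_add_natCast i, ← cyclicPartialSum, cyclicPartialSum_sum_smul_vecV]
      simp
    · simpa [cyclicPartialSum_sum_smul_vecV, hci] using hc _
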